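/- For f(w1,w2) = w1^2 w2^4 and the standard 2D Gaussian density φ, the modified zeta function ζ₁(z) = ∫∫ |w1|·(w1^2 w2^4)^z φ(w1,w2) dw1 dw2 equals (2^{3z+1/2}/π)·Γ(z+1)·Γ(2z+1/2) for all real z > -1/4. -/
import Mathlib

open Real MeasureTheory

lemma gauss_abs_moment {q : ℝ} (hq : -1 < q) :
    ∫ x : ℝ, |x| ^ q * Real.exp (-x ^ 2 / 2) =
      (2 : ℝ) ^ ((q + 1) / 2) * Real.Gamma ((q + 1) / 2) := by
  have h0 : (∫ x : ℝ, |x| ^ q * Real.exp (-x ^ 2 / 2))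
      = ∫ x : ℝ, (fun t : ℝ => t ^ q * Real.exp (-t ^ 2 / 2)) |x| := by
    congr 1; funext x; simp [sq_abs]
  rw [h0, integral_comp_abs (f := fun t : ℝ => t ^ q * Real.exp (-t ^ 2 / 2))]
  have h1 : ∫ x in Set.Ioi (0 : ℝ), x ^ q * Real.exp (-x ^ 2 / 2)
      = ∫ x in Set.Ioi (0 : ℝ), x ^ q * Real.exp (-(1/2) * x ^ (2 : ℝ)) := by
    refine setIntegral_congr_fun measurableSet_Ioi (fun x hx => ?_)
    have h2 : x ^ (2:ℝ) = x ^ 2 := by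
      rw [← Real.rpow_natCast x 2]; norm_num
    rw [h2]; ring_nf
  rw [h1, integral_rpow_mul_exp_neg_mul_rpow two_pos hq one_half_pos]
  have h2 : ((1:ℝ)/2) ^ (-(q+1)/2) = (2:ℝ) ^ ((q+1)/2) := by
    rw [one_div, Real.inv_rpow (by norm_num : (0:ℝ) ≤ 2), neg_div, Real.rpow_neg (by norm_num : (0:ℝ) ≤ 2), inv_inv]
  rw [h2]; ring

/-- For `f(w1,w2) = w1^2 * w2^4` and the standard 2D Gaussian density,
`ζ₁(z) = ∫∫ |w1| (w1^2 w2^4)^z φ dw = (2^(3z+1/2)/π) Γ(z+1) Γ(2z+1/2)` for real `z > -1/4`. -/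
theorem zeta1_w1sq_w2quart (z : ℝ) (hz : z > -(1/4)) :
    (∫ w1 : ℝ, ∫ w2 : ℝ,
        |w1| * (w1 ^ 2 * w2 ^ 4) ^ z * (1 / (2 * π) * Real.exp (-(w1 ^ 2 + w2 ^ 2) / 2)))
      = (2 : ℝ) ^ (3 * z + 1 / 2) / π * Real.Gamma (z + 1) * Real.Gamma (2 * z + 1 / 2) := by
  have hq1 : (-1:ℝ) < 2 * z + 1 := by linarith
  have hq2 : (-1:ℝ) < 4 * z := by linarith
  have key : ∀ w1 w2 : ℝ,
      |w1| * (w1 ^ 2 * w2 ^ 4) ^ z * (1 / (2 * π) * Real.exp (-(w1 ^ 2 + w2 ^ 2) / 2))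
      = (1 / (2 * π) * (|w1| ^ (2 * z + 1) * Real.exp (-w1 ^ 2 / 2))) *
          (|w2| ^ (4 * z) * Real.exp (-w2 ^ 2 / 2)) := by
    intro w1 w2
    have e1 : (w1 ^ 2 * w2 ^ 4 : ℝ) ^ z = (w1 ^ 2 : ℝ) ^ z * (w2 ^ 4 : ℝ) ^ z :=
      Real.mul_rpow (sq_nonneg _) (by positivity)
    have e2 : (w1 ^ 2 : ℝ) ^ z = |w1| ^ (2 * z) := by
      rw [← sq_abs, ← Real.rpow_natCast |w1| 2, ← Real.rpow_mul (abs_nonneg w1)]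
      norm_num
    have e3 : (w2 ^ 4 : ℝ) ^ z = |w2| ^ (4 * z) := by
      rw [show (w2 ^ 4 : ℝ) = |w2| ^ 4 from by rw [pow_abs, abs_of_nonneg (by positivity)],
        ← Real.rpow_natCast |w2| 4, ← Real.rpow_mul (abs_nonneg w2)]
      norm_num
    have e4 : |w1| ^ (2 * z + 1) = |w1| ^ (2 * z) * |w1| := by
      rw [Real.rpow_add' (abs_nonneg w1) (ne_of_gt (by linarith : (0:ℝ) < 2 * z + 1)),
        Real.rpow_one]
    have e5 : Real.exp (-(w1 ^ 2 + w2 ^ 2) / 2)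
        = Real.exp (-w1 ^ 2 / 2) * Real.exp (-w2 ^ 2 / 2) := by
      rw [← Real.exp_add]; ring_nf
    rw [e1, e2, e3, e4, e5]; ring
  simp_rw [key, MeasureTheory.integral_const_mul, MeasureTheory.integral_mul_const]
  rw [MeasureTheory.integral_const_mul]
  rw [gauss_abs_moment hq1, gauss_abs_moment hq2,
    show (2 * z + 1 + 1) / 2 = z + 1 by ring, show (4 * z + 1) / 2 = 2 * z + 1 / 2 by ring]
  have hp : (2:ℝ) ^ (z + 1) * (2:ℝ) ^ (2 * z + 1 / 2) = 2 * (2:ℝ) ^ (3 * z + 1 / 2) := by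
    rw [← Real.rpow_add two_pos, show z + 1 + (2 * z + 1 / 2) = 1 + (3 * z + 1 / 2) by ring,
      Real.rpow_add two_pos, Real.rpow_one]
  linear_combination (Real.Gamma (z + 1) * Real.Gamma (2 * z + 1 / 2) / (2 * π)) * hp
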